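/- Let v(η) = 2η² log η − η² + i(log 2)/(2π) − 1/8 and u(η) = v(η) + η, both holomorphic on the upper half-plane with the principal logarithm. Suppose a in the upper half-plane satisfies u(a) = 2n for an integer n, the closed disc of radius 1 around a lies in the upper half-plane, |a| is sufficiently large, and |log a| ≥ 1. Then v(η) = 2n has a solution b with |b − a| < 1; moreover b − a = 1/(4 log a) + O(1/|a|). -/

import Mathlib

/-!
Near `a` the equation `v η = 2n` is a small perturbation of its linearisation: since
`u a = 2n`, we have `2n - v a = a`, while `v' a = 4 a log a` has size `4|a| |log a|`. On the disc
`|η - a| ≤ 1/2` the derivative `v' η = 4 η log η` varies by `O(|log a|)`, so `v` is approximated by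
multiplication by `v' a` up to a constant much smaller than `|v' a|`. The quantitative inverse function
theorem then gives a solution `b` in that disc, and the approximation error bounds
`b - a - a / v' a = b - a - 1 / (4 log a)` by `O(|log a|) / |v' a| = O(1 / |a|)`.
-/

open Complex Metric Set
open scoped NNReal

/-- The function v(η) = 2η² log η − η² + i(log 2)/(2π) − 1/8, with the principal
branch of the complex logarithm. -/
noncomputable def v (η : ℂ) : ℂ :=
  2 * η ^ 2 * Complex.log η - η ^ 2 +
    Complex.I * (Real.log 2 : ℂ) / (2 * (Real.pi : ℂ)) - 1 / 8

/-- The function u(η) = v(η) + η. -/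
noncomputable def u (η : ℂ) : ℂ := v η + η

section Newton

variable {𝕜 : Type*} [RCLike 𝕜]

theorem approximatesLinearOn_mul_of_norm_deriv_sub_le {f f' : 𝕜 → 𝕜} {s : Set 𝕜}
    (hs : Convex ℝ s) (hf : ∀ z ∈ s, HasDerivWithinAt f (f' z) s z) {k : 𝕜} {c : ℝ≥0}
    (hc : ∀ z ∈ s, ‖f' z - k‖ ≤ c) :
    ApproximatesLinearOn f (ContinuousLinearMap.mul 𝕜 𝕜 k) s c := by
  intro x hx y hy
  have h := hs.norm_image_sub_le_of_norm_hasDerivWithin_le (f := fun z => f z - k * z)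
    (fun z hz => (hf z hz).sub ((hasDerivWithinAt_id z s).const_mul k |>.congr_deriv (mul_one k)))
    hc hy hx
  rw [ContinuousLinearMap.mul_apply']
  convert h using 2
  ring

theorem exists_eq_of_approximatesLinearOn_mul {f : 𝕜 → 𝕜} {a k w : 𝕜} {c : ℝ≥0} {ε : ℝ}
    (hf : ApproximatesLinearOn f (ContinuousLinearMap.mul 𝕜 𝕜 k) (closedBall a ε) c)
    (hk : k ≠ 0) (hε : 0 ≤ ε) (hw : ‖w - f a‖ ≤ (‖k‖ - c) * ε) :
    ∃ b ∈ closedBall a ε, f b = w ∧ ‖b - a - (w - f a) / k‖ ≤ c * ε / ‖k‖ := by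
  let kInv : (ContinuousLinearMap.mul 𝕜 𝕜 k).NonlinearRightInverse :=
    { toFun := fun y => k⁻¹ * y
      nnnorm := ‖k‖₊⁻¹
      bound' := fun y => by simp [norm_mul, norm_inv]
      right_inv' := fun y => by simp [hk] }
  have hkInv : ((kInv.nnnorm : ℝ))⁻¹ = ‖k‖ := by simp [kInv]
  obtain ⟨b, hb, rfl⟩ := hf.surjOn_closedBall_of_nonlinearRightInverse kInv hε subset_rfl
    (by rwa [mem_closedBall, dist_eq_norm, hkInv])
  refine ⟨b, hb, rfl, ?_⟩
  have hba : ‖b - a‖ ≤ ε := by rwa [mem_closedBall, dist_eq_norm] at hb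
  have hlin := hf b hb a (mem_closedBall_self hε)
  rw [ContinuousLinearMap.mul_apply'] at hlin
  calc ‖b - a - (f b - f a) / k‖ = ‖f b - f a - k * (b - a)‖ / ‖k‖ := by
        rw [← norm_div, ← norm_neg]
        congr 1
        field_simp
        ring
    _ ≤ c * ε / ‖k‖ := by gcongr; exact hlin.trans (by gcongr)

end Newton

theorem hasDerivAt_v {z : ℂ} (hz : z ∈ slitPlane) : HasDerivAt v (4 * z * Complex.log z) z := by
  have hlog : HasDerivAt (fun y => 2 * y ^ 2 * Complex.log y)
      (2 * ((2 : ℕ) * z ^ (2 - 1)) * Complex.log z + 2 * z ^ 2 * z⁻¹) z :=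
    ((hasDerivAt_pow 2 z).const_mul 2).mul (Complex.hasDerivAt_log hz)
  refine ((hlog.sub (hasDerivAt_pow 2 z)).add_const _ |>.sub_const _).congr_deriv ?_
  field_simp [slitPlane_ne_zero hz]
  push_cast
  ring

theorem norm_log_sub_log_le {a z : ℂ} {r : ℝ} (hr : r < ‖a‖) (hs : closedBall a r ⊆ slitPlane)
    (hz : z ∈ closedBall a r) : ‖Complex.log z - Complex.log a‖ ≤ ‖z - a‖ / (‖a‖ - r) := by
  have hnorm : ∀ x ∈ closedBall a r, ‖a‖ - r ≤ ‖x‖ := fun x hx => by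
    rw [mem_closedBall, dist_eq_norm] at hx
    linarith [norm_sub_norm_le a x, norm_sub_rev a x]
  have h := (convex_closedBall a r).norm_image_sub_le_of_norm_hasDerivWithin_le
    (fun x hx => (Complex.hasDerivAt_log (hs hx)).hasDerivWithinAt)
    (fun x hx => by
      rw [norm_inv]
      exact inv_anti₀ (by linarith) (hnorm x hx))
    (mem_closedBall_self (dist_nonneg.trans hz)) hz
  rwa [inv_mul_eq_div] at h

theorem approximatesLinearOn_v {a : ℂ} (ha : 1 ≤ ‖a‖) (hs : closedBall a (1 / 2) ⊆ slitPlane) :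
    ApproximatesLinearOn v (ContinuousLinearMap.mul ℂ ℂ (4 * a * Complex.log a))
      (closedBall a (1 / 2)) (2 * ‖Complex.log a‖₊ + 6) := by
  refine approximatesLinearOn_mul_of_norm_deriv_sub_le (convex_closedBall _ _)
    (fun z hz => (hasDerivAt_v (hs hz)).hasDerivWithinAt) fun z hz => ?_
  have hza : ‖z - a‖ ≤ 1 / 2 := by rwa [mem_closedBall, dist_eq_norm] at hz
  have hlog := norm_log_sub_log_le (by linarith) hs hz
  have hlog_le : ‖Complex.log z - Complex.log a‖ ≤ 1 :=
    hlog.trans (div_le_one_of_le₀ (by linarith) (by linarith))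
  have ha_log_le : ‖a‖ * ‖Complex.log z - Complex.log a‖ ≤ 1 := by
    rw [le_div_iff₀ (by linarith)] at hlog
    nlinarith
  have hlogz : ‖Complex.log z‖ ≤ ‖Complex.log a‖ + 1 := by
    linarith [norm_sub_norm_le (Complex.log z) (Complex.log a)]
  push_cast
  calc ‖4 * z * Complex.log z - 4 * a * Complex.log a‖
        = ‖4 * (z - a) * Complex.log z + 4 * a * (Complex.log z - Complex.log a)‖ := by ring_nf
    _ ≤ 4 * ‖z - a‖ * ‖Complex.log z‖ + 4 * (‖a‖ * ‖Complex.log z - Complex.log a‖) := by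
        refine (norm_add_le _ _).trans_eq ?_
        simp only [norm_mul, RCLike.norm_ofNat]
        ring
    _ ≤ 4 * (1 / 2) * (‖Complex.log a‖ + 1) + 4 * 1 := by gcongr
    _ = 2 * ‖Complex.log a‖ + 6 := by ring

theorem stmt_11 :
    ∃ C > (0 : ℝ), ∃ R > (0 : ℝ), ∀ a : ℂ, 0 < a.im →
      (∀ z : ℂ, ‖z - a‖ ≤ 1 → 0 < z.im) →
      R < ‖a‖ → 1 ≤ ‖Complex.log a‖ →
      ∀ n : ℤ, u a = 2 * n →
        ∃ b : ℂ, v b = 2 * n ∧ ‖b - a‖ < 1 ∧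
          ‖b - a - 1 / (4 * Complex.log a)‖ ≤ C / ‖a‖ := by
  refine ⟨1, one_pos, 4, by norm_num, fun a _ hdisc hR hlog n hu => ?_⟩
  have hs : closedBall a (1 / 2) ⊆ slitPlane := fun z hz => by
    rw [mem_closedBall, dist_eq_norm] at hz
    exact mem_slitPlane_iff.mpr (Or.inr (hdisc z (by linarith)).ne')
  have hva : 2 * n - v a = a := by rw [← hu, u]; ring
  have ha0 : a ≠ 0 := norm_pos_iff.mp (by linarith)
  have hk0 : 4 * a * Complex.log a ≠ 0 := by
    have : Complex.log a ≠ 0 := norm_pos_iff.mp (by linarith)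
    simp [ha0, this]
  have hk : ‖4 * a * Complex.log a‖ = 4 * ‖a‖ * ‖Complex.log a‖ := by simp
  obtain ⟨b, hb, hvb, hnewton⟩ := exists_eq_of_approximatesLinearOn_mul
    (approximatesLinearOn_v (by linarith) hs) hk0 (by norm_num) (w := 2 * (n : ℂ))
    (by push_cast; rw [hva, hk]; nlinarith)
  refine ⟨b, hvb, (mem_closedBall_iff_norm.mp hb).trans_lt (by norm_num), ?_⟩
  have hnewton_eq : a / (4 * a * Complex.log a) = 1 / (4 * Complex.log a) := by
    field_simp
  rw [hva, hnewton_eq, hk] at hnewton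
  refine hnewton.trans ?_
  push_cast
  rw [div_le_div_iff₀ (by positivity) (by linarith)]
  nlinarith
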